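/- Suppose A = (1,2,2). Let c be an admissible coefficient function satisfying (Cubic values), (Normalization) and (Symmetry). Then c(2e_{2,1}+2e_{3,1},0) = 0 and c(3e_{2,1}+e_{3,1},0) = c(3e_{3,1}+e_{2,1},0) = 0. -/

import Mathlib

/- Common framework: Frobenius manifolds for orbifold projective lines ℙ¹_A,
   following Ishibashi–Shiraishi–Takahashi. -/

namespace FrobeniusUniqueness

/-- A point index `(i, j)` labelling a flat coordinate `t_{i,j}`. -/
abbrev Pt : Type := Fin 3 × ℕ

/-- A non-negative element of `ℤ^{μ_A − 2}`: an exponent vector `α` with `α_{i,j} ∈ ℕ`. -/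
abbrev Expv : Type := Pt →₀ ℕ

/-- The standard basis vector `e_{i,j}`. -/
noncomputable def e (i : Fin 3) (j : ℕ) : Expv := Finsupp.single (i, j) 1

/-- The length `|α|` of an exponent vector. -/
def len (α : Expv) : ℕ := α.sum fun _ n => n

/-- A point index `(i,j)` is valid if `1 ≤ j ≤ a_i − 1`. -/
def ValidPt (A : Fin 3 → ℕ) (p : Pt) : Prop := 1 ≤ p.2 ∧ p.2 ≤ A p.1 - 1

/-- An exponent vector lies in `ℤ^{μ_A − 2}` iff it is supported on valid indices. -/
def Valid (A : Fin 3 → ℕ) (α : Expv) : Prop := ∀ p ∈ α.support, ValidPt A p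

/-- The combinatorial factor `s_{a,b,c}`. -/
def sFactor (a b c : ℕ) : ℂ :=
  if a = b ∧ b = c then 6
  else if a ≠ b ∧ b ≠ c ∧ a ≠ c then 1
  else 2

/-- The index type for the flat coordinates `t_1`, `t_{i,j}`, `t_{μ_A}`. -/
inductive Idx : Type where
  | one : Idx
  | pt : Fin 3 → ℕ → Idx
  | mu : Idx
deriving DecidableEq

/-- Validity of a flat coordinate index. -/
def ValidIdx (A : Fin 3 → ℕ) : Idx → Prop
  | .one => True
  | .pt i j => ValidPt A (i, j)
  | .mu => True

/-- The metric `η` in the frame `∂_1, ∂_{i,j}, ∂_{μ_A}`. -/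
noncomputable def eta (A : Fin 3 → ℕ) : Idx → Idx → ℂ
  | .one, .mu => 1
  | .mu, .one => 1
  | .pt i j, .pt i' j' =>
      if i = i' ∧ j + j' = A i ∧ 1 ≤ j ∧ j ≤ A i - 1 then (A i : ℂ)⁻¹ else 0
  | _, _ => 0

/-- The point indices occurring in an `Idx`. -/
def ptsOf : Idx → List Pt
  | .pt i j => [(i, j)]
  | _ => []

/-- The number of occurrences of `μ_A` in an `Idx`. -/
def muCount : Idx → ℕ
  | .mu => 1
  | _ => 0

/-- The factor produced when the monomial `t^{β + Σ_{p ∈ ps} e_p}` is differentiated by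
`∏_{p ∈ ps} ∂_p`, leaving the monomial `t^β`. -/
noncomputable def dfac (β : Expv) : List Pt → ℕ
  | [] => 1
  | p :: ps =>
      ((β + ((ps.map fun q => (Finsupp.single q 1 : Expv)).sum) + Finsupp.single p 1 : Expv) p)
        * dfac β ps

/-- `der A c a b d β m` is the coefficient of `t^β · e^{m·t_{μ_A}}` in `∂_a ∂_b ∂_d F`, where
`F = (1/2)t_1²t_{μ_A} + (1/2)t_1·Σ_{i,j}(1/a_i)t_{i,j}t_{i,a_i−j} + Σ_{α,m} c(α,m)t^α e^{m t_{μ_A}}`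
is the potential of the coefficient function `c`.  In particular `∂_1∂_a∂_b F = η(∂_a,∂_b)`. -/
noncomputable def der (A : Fin 3 → ℕ) (c : Expv → ℕ → ℂ) (a b d : Idx) (β : Expv) (m : ℕ) : ℂ :=
  if a = .one then (if β = 0 ∧ m = 0 then eta A b d else 0)
  else if b = .one then (if β = 0 ∧ m = 0 then eta A a d else 0)
  else if d = .one then (if β = 0 ∧ m = 0 then eta A a b else 0)
  else
    (m : ℂ) ^ (muCount a + muCount b + muCount d) *
      (dfac β (ptsOf a ++ ptsOf b ++ ptsOf d) : ℂ) *
      c (β + (((ptsOf a ++ ptsOf b ++ ptsOf d).map fun q => (Finsupp.single q 1 : Expv)).sum)) m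

/-- The coefficient of `t^β · e^{m·t_{μ_A}}` in
`Σ_{σ,τ} ∂_a∂_b∂_σF · η^{στ} · ∂_τ∂_d∂_e F`, where `(η^{στ})` is the inverse matrix of
`(η_{στ})` (so the only nonzero entries are `η^{1,μ_A} = η^{μ_A,1} = 1` and
`η^{(i,j),(i,a_i−j)} = a_i`). -/
noncomputable def quadTerm (A : Fin 3 → ℕ) (c : Expv → ℕ → ℂ) (a b d e' : Idx)
    (β : Expv) (m : ℕ) : ℂ :=
  ∑ x ∈ Finset.HasAntidiagonal.antidiagonal β, ∑ y ∈ Finset.HasAntidiagonal.antidiagonal m,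
    (der A c a b .one x.1 y.1 * der A c .mu d e' x.2 y.2
     + der A c a b .mu x.1 y.1 * der A c .one d e' x.2 y.2
     + ∑ i : Fin 3, ∑ j ∈ Finset.Icc 1 (A i - 1),
         (A i : ℂ) * der A c a b (.pt i j) x.1 y.1 * der A c (.pt i (A i - j)) d e' x.2 y.2)

/-- `χ_A = 1/a_1 + 1/a_2 + 1/a_3 − 1`. -/
noncomputable def chi (A : Fin 3 → ℕ) : ℚ := (A 0 : ℚ)⁻¹ + (A 1 : ℚ)⁻¹ + (A 2 : ℚ)⁻¹ - 1

/-- The degree of the monomial `t^α`: `Σ_{i,j} α_{i,j}·(a_i − j)/a_i`. -/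
noncomputable def deg (A : Fin 3 → ℕ) (α : Expv) : ℚ :=
  α.sum fun p n => (n : ℚ) * (((A p.1 : ℚ) - (p.2 : ℚ)) / (A p.1 : ℚ))

/-- A coefficient function is admissible if it satisfies (Homogeneity) and the WDVV
equations (coefficientwise, in the variables `t_{i,j}` and `e^{t_{μ_A}}`). -/
structure IsAdmissible (A : Fin 3 → ℕ) (c : Expv → ℕ → ℂ) : Prop where
  homog : ∀ α : Expv, Valid A α → ∀ m : ℕ, c α m ≠ 0 → deg A α + (m : ℚ) * chi A = 2
  wdvv : ∀ a b d e' : Idx, ValidIdx A a → ValidIdx A b → ValidIdx A d → ValidIdx A e' →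
      ∀ β : Expv, Valid A β → ∀ m : ℕ,
        quadTerm A c a b d e' β m = quadTerm A c a d b e' β m

/-- (Cubic values). -/
def CubicValues (A : Fin 3 → ℕ) (c : Expv → ℕ → ℂ) : Prop :=
  (∀ (i₁ i₂ i₃ : Fin 3) (j₁ j₂ j₃ : ℕ),
      ValidPt A (i₁, j₁) → ValidPt A (i₂, j₂) → ValidPt A (i₃, j₃) →
      ¬(i₁ = i₂ ∧ i₂ = i₃) → c (e i₁ j₁ + e i₂ j₂ + e i₃ j₃) 0 = 0) ∧
  (∀ (i : Fin 3) (j₁ j₂ j₃ : ℕ),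
      ValidPt A (i, j₁) → ValidPt A (i, j₂) → ValidPt A (i, j₃) →
      sFactor j₁ j₂ j₃ * c (e i j₁ + e i j₂ + e i j₃) 0 =
        if j₁ + j₂ + j₃ = A i then (A i : ℂ)⁻¹ else 0)

/-- (Normalization). -/
def Normalization (A : Fin 3 → ℕ) (c : Expv → ℕ → ℂ) : Prop :=
  (2 ≤ A 0 → c (e 0 1 + e 1 1 + e 2 1) 1 = 1) ∧
  (A 0 = 1 → A 0 < A 1 → c (e 1 1 + e 2 1) 1 = 1) ∧
  (A 0 = 1 → A 1 = 1 → A 1 < A 2 → c (e 2 1) 1 = 1) ∧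
  (A 0 = 1 → A 1 = 1 → A 2 = 1 → c 0 1 = 1)

/-- (Separation). -/
def Separation (A : Fin 3 → ℕ) (c : Expv → ℕ → ℂ) : Prop :=
  ∀ γ : Expv, Valid A γ →
    ∀ (i₁ i₂ : Fin 3) (j₁ j₂ : ℕ), i₁ ≠ i₂ → ValidPt A (i₁, j₁) → ValidPt A (i₂, j₂) →
      e i₁ j₁ + e i₂ j₂ ≤ γ → c γ 0 = 0

/-- The automorphism of `ℤ^{μ_A−2}` exchanging `e_{i₁,j}` and `e_{i₂,j}` for all `j`. -/
def swapExp (i₁ i₂ : Fin 3) (α : Expv) : Expv :=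
  Finsupp.equivMapDomain ((Equiv.swap i₁ i₂).prodCongr (Equiv.refl ℕ)) α

/-- (Symmetry). -/
def Symmetry (A : Fin 3 → ℕ) (c : Expv → ℕ → ℂ) : Prop :=
  ∀ i₁ i₂ : Fin 3, A i₁ = A i₂ → ∀ α : Expv, Valid A α → ∀ m : ℕ,
    c (swapExp i₁ i₂ α) m = c α m


/-!
For `A = (1,2,2)` we have `χ_A = 1` and the coordinates `t_{2,1}`, `t_{3,1}` have degree `1/2`,
so homogeneity kills every coefficient `c(n₁ e_{2,1} + n₂ e_{3,1}, m)` with `n₁ + n₂ + 2m ≠ 4`;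
in particular all coefficients with `n₁ + n₂ = 3` vanish. Three WDVV equations remain:
the coefficient of `e^{t_μ}` in the one for `(∂_{2,1}, ∂_{2,1}, ∂_{3,1}, ∂_{3,1})` gives
`c(2e_{2,1},1) + c(2e_{3,1},1) = 0`, so `c(2e_{2,1},1) = 0` by symmetry; and the coefficients of
`t_{2,1}² e^{t_μ}` in those for `(∂_{2,1}, ∂_{2,1}, ∂_μ, ∂_μ)` and `(∂_{2,1}, ∂_{3,1}, ∂_μ, ∂_μ)`
reduce, with `c(e_{2,1} + e_{3,1}, 1) = 1`, to `12 c(3e_{2,1} + e_{3,1}, 0) = 0` and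
`8 c(2e_{2,1} + 2e_{3,1}, 0) = 0`.
-/

section OneTwoTwo

variable {c : Expv → ℕ → ℂ}

-- `n₁ e_{2,1} + n₂ e_{3,1}` in the paper's numbering, which starts the `a_i` at `i = 1`.
noncomputable def expv (n₁ n₂ : ℕ) : Expv := n₁ • e 1 1 + n₂ • e 2 1

lemma expv_eq_single_add_single (n₁ n₂ : ℕ) :
    expv n₁ n₂ = Finsupp.single (1, 1) n₁ + Finsupp.single (2, 1) n₂ := by
  simp [expv, e, Finsupp.smul_single]

lemma valid_expv (n₁ n₂ : ℕ) : Valid ![1, 2, 2] (expv n₁ n₂) := by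
  intro p hp
  rw [expv_eq_single_add_single] at hp
  rcases Finset.mem_union.1 (Finsupp.support_add hp) with h | h <;>
    obtain rfl := Finset.mem_singleton.1 (Finsupp.support_single_subset h) <;>
    exact ⟨le_rfl, le_rfl⟩

lemma deg_expv (n₁ n₂ : ℕ) : deg ![1, 2, 2] (expv n₁ n₂) = n₁ / 2 + n₂ / 2 := by
  rw [deg, expv_eq_single_add_single, Finsupp.sum_add_index (by simp) (by intros; push_cast; ring),
    Finsupp.sum_single_index (by simp), Finsupp.sum_single_index (by simp)]
  norm_num [Matrix.cons_val_two]
  ring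

lemma chi_one_two_two : chi ![1, 2, 2] = 1 := by
  norm_num [chi, Matrix.cons_val_two]

lemma IsAdmissible.coeff_expv_eq_zero_of_ne (hadm : IsAdmissible ![1, 2, 2] c)
    {n₁ n₂ m : ℕ} (h : n₁ + n₂ + 2 * m ≠ 4) : c (expv n₁ n₂) m = 0 := by
  by_contra hc
  have hom := hadm.homog _ (valid_expv n₁ n₂) m hc
  rw [deg_expv, chi_one_two_two] at hom
  exact h (by exact_mod_cast (by linarith : (n₁ + n₂ + 2 * m : ℚ) = 4))

lemma swapExp_expv (n₁ n₂ : ℕ) : swapExp 1 2 (expv n₁ n₂) = expv n₂ n₁ := by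
  simp [swapExp, expv_eq_single_add_single, Finsupp.equivMapDomain_eq_mapDomain,
    Finsupp.mapDomain_add, add_comm]

lemma Symmetry.coeff_expv_comm (hsym : Symmetry ![1, 2, 2] c) (n₁ n₂ m : ℕ) :
    c (expv n₂ n₁) m = c (expv n₁ n₂) m := by
  rw [← swapExp_expv, hsym 1 2 rfl _ (valid_expv n₁ n₂)]

@[simp] lemma expv_add_expv (n₁ n₂ k₁ k₂ : ℕ) :
    expv n₁ n₂ + expv k₁ k₂ = expv (n₁ + k₁) (n₂ + k₂) := by
  simp only [expv, add_smul]; abel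

@[simp] lemma expv_apply_one_one (n₁ n₂ : ℕ) : expv n₁ n₂ (1, 1) = n₁ := by
  simp [expv_eq_single_add_single]

@[simp] lemma expv_apply_two_one (n₁ n₂ : ℕ) : expv n₁ n₂ (2, 1) = n₂ := by
  simp [expv_eq_single_add_single]

@[simp] lemma single_one_one_eq_expv (n : ℕ) : Finsupp.single (1, 1) n = expv n 0 := by
  simp [expv_eq_single_add_single]

@[simp] lemma single_two_one_eq_expv (n : ℕ) : Finsupp.single (2, 1) n = expv 0 n := by
  simp [expv_eq_single_add_single]

@[simp] lemma expv_eq_zero_iff {n₁ n₂ : ℕ} : expv n₁ n₂ = 0 ↔ n₁ = 0 ∧ n₂ = 0 := by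
  constructor
  · intro h
    exact ⟨by simpa using congrArg (· (1, 1)) h, by simpa using congrArg (· (2, 1)) h⟩
  · rintro ⟨rfl, rfl⟩
    simp [expv]

lemma Normalization.coeff_expv_one_one (hnorm : Normalization ![1, 2, 2] c) :
    c (expv 1 1) 1 = 1 := by
  simpa [expv] using hnorm.2.1 rfl (by decide)

lemma quadTerm_one_two_two (a b d e' : Idx) (β : Expv) (m : ℕ) :
    quadTerm ![1, 2, 2] c a b d e' β m =
      ∑ x ∈ Finset.HasAntidiagonal.antidiagonal β, ∑ y ∈ Finset.HasAntidiagonal.antidiagonal m,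
        (der ![1, 2, 2] c a b .one x.1 y.1 * der ![1, 2, 2] c .mu d e' x.2 y.2
          + der ![1, 2, 2] c a b .mu x.1 y.1 * der ![1, 2, 2] c .one d e' x.2 y.2
          + 2 * der ![1, 2, 2] c a b (.pt 1 1) x.1 y.1 * der ![1, 2, 2] c (.pt 1 1) d e' x.2 y.2
          + 2 * der ![1, 2, 2] c a b (.pt 2 1) x.1 y.1 * der ![1, 2, 2] c (.pt 2 1) d e' x.2 y.2) := by
  simp [quadTerm, Fin.sum_univ_three, Matrix.cons_val_two, add_assoc]

lemma IsAdmissible.wdvv_one_one_two_two (hadm : IsAdmissible ![1, 2, 2] c) :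
    c (expv 0 2) 1 + c (expv 2 0) 1 = 0 := by
  have h := hadm.wdvv (.pt 1 1) (.pt 1 1) (.pt 2 1) (.pt 2 1)
    ⟨le_rfl, le_rfl⟩ ⟨le_rfl, le_rfl⟩ ⟨le_rfl, le_rfl⟩ ⟨le_rfl, le_rfl⟩ 0 (by simp [Valid]) 1
  simp only [quadTerm_one_two_two, Finsupp.antidiagonal_zero,
    show Finset.HasAntidiagonal.antidiagonal 1 = {(0, 1), (1, 0)} from by decide] at h
  simp [der, dfac, ptsOf, muCount, eta, hadm.coeff_expv_eq_zero_of_ne] at h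
  linear_combination h

lemma IsAdmissible.wdvv_one_one_mu_mu (hadm : IsAdmissible ![1, 2, 2] c) :
    c (expv 2 0) 1 / 2 + 96 * c (expv 4 0) 0 * c (expv 2 0) 1
      + 12 * c (expv 3 1) 0 * c (expv 1 1) 1 = 0 := by
  have h := hadm.wdvv (.pt 1 1) (.pt 1 1) .mu .mu
    ⟨le_rfl, le_rfl⟩ ⟨le_rfl, le_rfl⟩ trivial trivial
    (expv 2 0) (valid_expv 2 0) 1
  simp only [quadTerm_one_two_two, ← single_one_one_eq_expv, Finsupp.antidiagonal_single,
    Finset.sum_map,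
    show Finset.HasAntidiagonal.antidiagonal 1 = {(0, 1), (1, 0)} from by decide,
    show Finset.HasAntidiagonal.antidiagonal 2 = {(0, 2), (1, 1), (2, 0)} from by decide] at h
  simp [der, dfac, ptsOf, muCount, eta, hadm.coeff_expv_eq_zero_of_ne] at h
  linear_combination h

lemma IsAdmissible.wdvv_one_two_mu_mu (hadm : IsAdmissible ![1, 2, 2] c) :
    24 * c (expv 3 1) 0 * c (expv 2 0) 1 + 8 * c (expv 2 2) 0 * c (expv 1 1) 1 = 0 := by
  have h := hadm.wdvv (.pt 1 1) (.pt 2 1) .mu .mu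
    ⟨le_rfl, le_rfl⟩ ⟨le_rfl, le_rfl⟩ trivial trivial
    (expv 2 0) (valid_expv 2 0) 1
  simp only [quadTerm_one_two_two, ← single_one_one_eq_expv, Finsupp.antidiagonal_single,
    Finset.sum_map,
    show Finset.HasAntidiagonal.antidiagonal 1 = {(0, 1), (1, 0)} from by decide,
    show Finset.HasAntidiagonal.antidiagonal 2 = {(0, 2), (1, 1), (2, 0)} from by decide] at h
  simp [der, dfac, ptsOf, muCount, eta, hadm.coeff_expv_eq_zero_of_ne] at h
  linear_combination h

lemma IsAdmissible.coeff_expv_two_zero_one (hadm : IsAdmissible ![1, 2, 2] c)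
    (hsym : Symmetry ![1, 2, 2] c) : c (expv 2 0) 1 = 0 := by
  have h := hadm.wdvv_one_one_two_two
  rw [hsym.coeff_expv_comm 2 0] at h
  linear_combination h / 2

lemma IsAdmissible.coeff_expv_three_one_zero (hadm : IsAdmissible ![1, 2, 2] c)
    (hsym : Symmetry ![1, 2, 2] c) (hnorm : Normalization ![1, 2, 2] c) :
    c (expv 3 1) 0 = 0 := by
  have h := hadm.wdvv_one_one_mu_mu
  rw [hadm.coeff_expv_two_zero_one hsym, hnorm.coeff_expv_one_one] at h
  linear_combination h / 12

lemma IsAdmissible.coeff_expv_two_two_zero (hadm : IsAdmissible ![1, 2, 2] c)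
    (hsym : Symmetry ![1, 2, 2] c) (hnorm : Normalization ![1, 2, 2] c) :
    c (expv 2 2) 0 = 0 := by
  have h := hadm.wdvv_one_two_mu_mu
  rw [hadm.coeff_expv_two_zero_one hsym, hnorm.coeff_expv_one_one] at h
  linear_combination h / 8

end OneTwoTwo

theorem case_122_degree_zero_general (A : Fin 3 → ℕ)
    (hA0 : A 0 = 1) (hA1 : A 1 = 2) (hA2 : A 2 = 2)
    (c : Expv → ℕ → ℂ) (hadm : IsAdmissible A c)
    (hnorm : Normalization A c) (hsym : Symmetry A c) :
    c (2 • e 1 1 + 2 • e 2 1) 0 = 0 ∧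
    c (3 • e 1 1 + e 2 1) 0 = 0 ∧ c (3 • e 2 1 + e 1 1) 0 = 0 := by
  obtain rfl : A = ![1, 2, 2] := by
    ext i; fin_cases i <;> simp [hA0, hA1, hA2]
  have h31 := hadm.coeff_expv_three_one_zero hsym hnorm
  refine ⟨hadm.coeff_expv_two_two_zero hsym hnorm, ?_, ?_⟩
  · simpa [expv] using h31
  · rw [← hsym.coeff_expv_comm] at h31
    simpa [expv, add_comm] using h31

/-- Sub-Lemma (Step 4): the case A = (1,2,2). -/
theorem case_122_degree_zero (A : Fin 3 → ℕ) (hA : ∀ i, 1 ≤ A i) (hA01 : A 0 ≤ A 1) (hA12 : A 1 ≤ A 2)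
    (hA0 : A 0 = 1) (hA1 : A 1 = 2) (hA2 : A 2 = 2)
    (c : Expv → ℕ → ℂ) (hadm : IsAdmissible A c) (hcub : CubicValues A c)
    (hnorm : Normalization A c) (hsym : Symmetry A c) :
    c (2 • e 1 1 + 2 • e 2 1) 0 = 0 ∧
    c (3 • e 1 1 + e 2 1) 0 = 0 ∧ c (3 • e 2 1 + e 1 1) 0 = 0 :=
  case_122_degree_zero_general A hA0 hA1 hA2 c hadm hnorm hsym

end FrobeniusUniqueness
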